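/- arXiv:2603.19927 — 6 statements merged into one kernel-verified Lean document; each statement's English description precedes it below -/
import Mathlib

section
/- For all natural numbers n, m ≥ 1 and every real number x, tr(A_x^n · B_x^m) = 2^(m-1)·x^m + 2^(n-1)·x^n + 2^(n+m-2)·x^(n+m). -/
open Matrix

/-- The matrix `A_x`. -/
def Amat (x : ℝ) : Matrix (Fin 3) (Fin 3) ℝ :=
  !![1, 0, 0; 0, x, -x; 0, -x, x]

/-- The matrix `B_x`. -/
def Bmat (x : ℝ) : Matrix (Fin 3) (Fin 3) ℝ :=
  !![x, -x, 0; -x, x, 0; 0, 0, 1]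

/-! Both families are closed under multiplication, `A_s A_t = A_{2st}` and `B_s B_t = B_{2st}`,
because `!![1, -1; -1, 1]` squares to twice itself. Hence `A_x ^ n = A_{2^(n-1) x^n}` and
`B_x ^ m = B_{2^(m-1) x^m}`, and the trace of `A_s B_t` is `t + s + st`. -/

theorem pow_succ_of_mul_eq {R M : Type*} [CommMonoid R] [Monoid M] (f : R → M) (c : R)
    (hf : ∀ s t, f s * f t = f (c * s * t)) (x : R) (n : ℕ) :
    f x ^ (n + 1) = f (c ^ n * x ^ (n + 1)) := by
  induction n with
  | zero => simp
  | succ n ih =>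
    rw [pow_succ, ih, hf, pow_succ c, pow_succ x (n + 1)]
    ac_rfl

theorem Amat_mul_Amat (s t : ℝ) : Amat s * Amat t = Amat (2 * s * t) := by
  ext i j
  fin_cases i <;> fin_cases j <;> simp [Amat, Matrix.mul_apply, Fin.sum_univ_three] <;> ring

theorem Bmat_mul_Bmat (s t : ℝ) : Bmat s * Bmat t = Bmat (2 * s * t) := by
  ext i j
  fin_cases i <;> fin_cases j <;> simp [Bmat, Matrix.mul_apply, Fin.sum_univ_three] <;> ring

theorem trace_Amat_mul_Bmat (s t : ℝ) : (Amat s * Bmat t).trace = t + s + s * t := by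
  simp [Amat, Bmat, Matrix.trace, Fin.sum_univ_three]
  ring

theorem stmt_2 : ∀ n m : ℕ, 1 ≤ n → 1 ≤ m → ∀ x : ℝ,
    (Amat x ^ n * Bmat x ^ m).trace =
      2 ^ (m - 1) * x ^ m + 2 ^ (n - 1) * x ^ n + 2 ^ (n + m - 2) * x ^ (n + m) := by
  intro n m hn hm x
  obtain ⟨n, rfl⟩ : ∃ k, n = k + 1 := ⟨n - 1, by omega⟩
  obtain ⟨m, rfl⟩ : ∃ k, m = k + 1 := ⟨m - 1, by omega⟩
  rw [pow_succ_of_mul_eq Amat 2 Amat_mul_Amat, pow_succ_of_mul_eq Bmat 2 Bmat_mul_Bmat,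
    trace_Amat_mul_Bmat, show n + 1 + (m + 1) - 2 = n + m by omega]
  simp only [Nat.add_sub_cancel]
  ring
end

section
/- For every word w : List Bool, every coefficient of the word trace polynomial T(w) ∈ ℝ[X] is nonnegative. -/
open Matrix Polynomial

/-!
Conjugation by `D = diag(1, -1, 1)` multiplies entry `(i, j)` by `D i i * D j j`, which is `-1`
exactly where `𝔸` and `𝔹` have the entries `-X`. So `D 𝔸 D` and `D 𝔹 D` are the entrywise absolute
values `|𝔸|`, `|𝔹|`, with entries `0`, `1`, `X`. As `D * D = 1`, conjugation by `D` commutes with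
products and preserves traces, so `T(w)` is the trace of a product of matrices over the semiring of
polynomials with nonnegative coefficients.
-/

/-- The polynomial matrix `𝔸`. -/
noncomputable def Apoly : Matrix (Fin 3) (Fin 3) (Polynomial ℝ) :=
  !![1, 0, 0; 0, X, -X; 0, -X, X]

/-- The polynomial matrix `𝔹`. -/
noncomputable def Bpoly : Matrix (Fin 3) (Fin 3) (Polynomial ℝ) :=
  !![X, -X, 0; -X, X, 0; 0, 0, 1]

/-- The word trace polynomial `T(w)`. -/
noncomputable def T (w : List Bool) : Polynomial ℝ :=
  ((w.map fun b => if b = true then Apoly else Bpoly).prod).trace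

namespace Polynomial

variable {R : Type*} [Semiring R] [PartialOrder R] [IsOrderedRing R]

def nonnegCoeffs : Subsemiring R[X] where
  carrier := {p | ∀ n, 0 ≤ p.coeff n}
  mul_mem' {p q} hp hq n := by
    rw [coeff_mul]
    exact Finset.sum_nonneg fun x _ => mul_nonneg (hp x.1) (hq x.2)
  one_mem' n := by
    rw [coeff_one]
    split_ifs <;> simp
  add_mem' {p q} hp hq n := by
    rw [coeff_add]
    exact add_nonneg (hp n) (hq n)
  zero_mem' n := by simp

theorem mem_nonnegCoeffs {p : R[X]} : p ∈ nonnegCoeffs ↔ ∀ n, 0 ≤ p.coeff n :=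
  Iff.rfl

theorem X_mem_nonnegCoeffs : (X : R[X]) ∈ nonnegCoeffs := fun n => by
  rw [coeff_X]
  split_ifs <;> simp

end Polynomial

theorem List.prod_map_conj_of_mul_self_eq_one {M : Type*} [Monoid M] {d : M} (hd : d * d = 1)
    (L : List M) : (L.map fun a => d * a * d).prod = d * L.prod * d := by
  simpa [ConjAct.units_smul_def] using
    (List.smul_prod' (r := ConjAct.toConjAct (⟨d, d, hd, hd⟩ : Mˣ)) (l := L)).symm

theorem Matrix.trace_list_prod_mem {n R : Type*} [Fintype n] [DecidableEq n] [Semiring R]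
    (S : Subsemiring R) {L : List (Matrix n n R)} (hL : ∀ M ∈ L, M ∈ S.matrix) :
    L.prod.trace ∈ S := by
  have hprod : L.prod ∈ S.matrix := list_prod_mem hL
  exact S.sum_mem fun i _ => hprod i i

noncomputable def signDiag : Matrix (Fin 3) (Fin 3) ℝ[X] :=
  diagonal ![1, -1, 1]

theorem signDiag_mul_self : signDiag * signDiag = 1 := by
  rw [signDiag, diagonal_mul_diagonal, ← diagonal_one]
  congr 1
  ext i
  fin_cases i <;> simp

noncomputable def absApoly : Matrix (Fin 3) (Fin 3) ℝ[X] :=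
  !![1, 0, 0; 0, X, X; 0, X, X]

noncomputable def absBpoly : Matrix (Fin 3) (Fin 3) ℝ[X] :=
  !![X, X, 0; X, X, 0; 0, 0, 1]

noncomputable def absLetter (b : Bool) : Matrix (Fin 3) (Fin 3) ℝ[X] :=
  if b = true then absApoly else absBpoly

theorem letter_eq_signDiag_conj (b : Bool) :
    (if b = true then Apoly else Bpoly) = signDiag * absLetter b * signDiag := by
  ext i j
  cases b <;> fin_cases i <;> fin_cases j <;>
    simp [signDiag, absLetter, Apoly, Bpoly, absApoly, absBpoly]

theorem T_eq_trace_prod_absLetter (w : List Bool) : T w = (w.map absLetter).prod.trace :=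
  calc T w = (w.map fun b => signDiag * absLetter b * signDiag).prod.trace := by
        simp only [T, letter_eq_signDiag_conj]
    _ = (signDiag * (w.map absLetter).prod * signDiag).trace := by
        rw [← List.prod_map_conj_of_mul_self_eq_one signDiag_mul_self, List.map_map,
          Function.comp_def]
    _ = (w.map absLetter).prod.trace := by
        rw [trace_mul_cycle, signDiag_mul_self, one_mul]

theorem absLetter_mem_nonnegCoeffs_matrix (b : Bool) :
    absLetter b ∈ (nonnegCoeffs : Subsemiring ℝ[X]).matrix := by
  intro i j
  cases b <;> fin_cases i <;> fin_cases j <;>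
    simp [absLetter, absApoly, absBpoly, zero_mem, one_mem, X_mem_nonnegCoeffs]

theorem stmt_4 : ∀ w : List Bool, ∀ d : ℕ, 0 ≤ (T w).coeff d := by
  intro w
  rw [T_eq_trace_prod_absLetter]
  refine mem_nonnegCoeffs.mp (trace_list_prod_mem _ ?_)
  exact List.forall_mem_map.mpr fun b _ => absLetter_mem_nonnegCoeffs_matrix b
end

section
/- Let r ≥ 1 and let a, b : Fin r → ℕ with a_i ≥ 1 and b_i ≥ 1 for all i. Let w : List Bool be the concatenation, over i = 0, 1, …, r−1 in order, of a_i copies of true followed by b_i copies of false (the word A^{a_1}B^{b_1}⋯A^{a_r}B^{b_r}). Then T(w) ≠ 0, and the least degree d such that the coefficient of X^d in T(w) is nonzero equals the minimum, over all subsets S ⊆ Fin r, of (∑_{i ∉ S} a_i) + (∑_{i ∈ Γ(S)} b_i), where Γ(S) := { i ∈ Fin r : i ∈ S or i+1 ∈ S }, with i+1 taken modulo r. -/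
/-!
𝔸 and 𝔹 act on a 2-dimensional subspace: every syllable 𝔸^m 𝔹^n with m, n ≥ 1 factors as
`inclMat * blockMatrix m n * projMat` with `projMat * inclMat = 1`, so T(w) is the trace of the
product of the 2 × 2 matrices `blockMatrix (a i) (b i)`. Expanding that trace as a sum over closed
walks q : ℤ/r → {0, 1} writes T(w) as a sum of products of entries of these matrices. All the
entries have nonnegative coefficients, so nothing cancels, and the trailing degree of T(w) is the
least total trailing degree of a walk; with S = {i | q i = 0}, that total is
∑_{i ∉ S} a_i + ∑_{i ∈ Γ(S)} b_i.
-/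

open Matrix Polynomial

namespace Matrix

variable {n R : Type*} [Fintype n] [DecidableEq n] [CommSemiring R]

theorem list_ofFn_prod_apply {r : ℕ} (f : Fin (r + 1) → Matrix n n R) (i j : n) :
    (List.ofFn f).prod i j =
      ∑ v : Fin r → n,
        ∏ k, f k (Fin.cons (α := fun _ ↦ n) i v k) (Fin.snoc (α := fun _ ↦ n) v j k) := by
  induction r generalizing i with
  | zero => simp [Fin.snoc]
  | succ r ih =>
    rw [List.ofFn_succ, List.prod_cons, mul_apply, ← (Fin.consEquiv fun _ => n).sum_comp,
      Fintype.sum_prod_type]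
    refine Finset.sum_congr rfl fun x _ => ?_
    rw [ih, Finset.mul_sum]
    refine Finset.sum_congr rfl fun v _ => ?_
    simp only [Fin.consEquiv, Equiv.coe_fn_mk, ← Fin.cons_snoc_eq_snoc_cons, Fin.prod_univ_succ,
      Fin.cons_zero, Fin.cons_succ]

theorem trace_list_ofFn_prod {r : ℕ} (f : Fin (r + 1) → Matrix n n R) :
    trace (List.ofFn f).prod =
      ∑ q : Fin (r + 1) → n, ∏ k, f k (q k) (q (finRotate (r + 1) k)) := by
  simp only [trace, diag, list_ofFn_prod_apply, Fin.snoc_eq_cons_rotate]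
  rw [← (Fin.consEquiv fun _ => n).sum_comp, Fintype.sum_prod_type]
  rfl

end Matrix

theorem Matrix.list_prod_map_conj {m k R : Type*} [Fintype m] [Fintype k] [DecidableEq m]
    [DecidableEq k] [Semiring R] {P : Matrix m k R} {Q : Matrix k m R} (hQP : Q * P = 1) :
    ∀ l : List (Matrix k k R), l ≠ [] → (l.map fun M => P * M * Q).prod = P * l.prod * Q
  | [M], _ => by simp
  | M :: N :: l, _ => by
    have ih := list_prod_map_conj hQP (N :: l) (List.cons_ne_nil _ _)
    rw [List.map_cons, List.prod_cons, ih]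
    simp only [List.prod_cons, Matrix.mul_assoc, ← Matrix.mul_assoc Q P, hQP, Matrix.one_mul]

namespace Polynomial

theorem trailingDegree_prod {R ι : Type*} [CommSemiring R] [NoZeroDivisors R] [Nontrivial R]
    (s : Finset ι) (f : ι → R[X]) :
    (∏ i ∈ s, f i).trailingDegree = ∑ i ∈ s, (f i).trailingDegree := by
  classical
  induction s using Finset.induction_on with
  | empty => simp
  | insert i s hi ih => rw [Finset.prod_insert hi, Finset.sum_insert hi, trailingDegree_mul, ih]

def CoeffsNonneg {R : Type*} [Semiring R] [LE R] (p : R[X]) : Prop := ∀ n, 0 ≤ p.coeff n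

section OrderedSemiring

variable {R : Type*} [Semiring R] [PartialOrder R] [IsOrderedRing R]

namespace CoeffsNonneg

variable {p q : R[X]}

theorem add (hp : CoeffsNonneg p) (hq : CoeffsNonneg q) : CoeffsNonneg (p + q) := fun n => by
  rw [coeff_add]
  exact add_nonneg (hp n) (hq n)

theorem mul (hp : CoeffsNonneg p) (hq : CoeffsNonneg q) : CoeffsNonneg (p * q) := fun n => by
  rw [coeff_mul]
  exact Finset.sum_nonneg fun x _ => mul_nonneg (hp x.1) (hq x.2)

theorem support_add (hp : CoeffsNonneg p) (hq : CoeffsNonneg q) :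
    (p + q).support = p.support ∪ q.support := by
  ext n
  simp only [Finset.mem_union, mem_support_iff, coeff_add, Ne,
    add_eq_zero_iff_of_nonneg (hp n) (hq n)]
  tauto

theorem trailingDegree_add (hp : CoeffsNonneg p) (hq : CoeffsNonneg q) :
    (p + q).trailingDegree = min p.trailingDegree q.trailingDegree := by
  simp only [trailingDegree, support_add hp hq, Finset.min_union]
  rfl

end CoeffsNonneg

theorem coeffsNonneg_sum {ι : Type*} {s : Finset ι} {f : ι → R[X]}
    (hf : ∀ i ∈ s, CoeffsNonneg (f i)) : CoeffsNonneg (∑ i ∈ s, f i) := fun n => by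
  rw [finsetSum_coeff]
  exact Finset.sum_nonneg fun i hi => hf i hi n

theorem trailingDegree_sum_of_coeffsNonneg {ι : Type*} (s : Finset ι) {f : ι → R[X]}
    (hf : ∀ i ∈ s, CoeffsNonneg (f i)) :
    (∑ i ∈ s, f i).trailingDegree = s.inf fun i => (f i).trailingDegree := by
  classical
  induction s using Finset.induction_on with
  | empty => simp
  | insert i s hi ih =>
    have hs : ∀ j ∈ s, CoeffsNonneg (f j) := fun j hj => hf j (Finset.mem_insert_of_mem hj)
    rw [Finset.sum_insert hi, Finset.inf_insert,
      (hf i (s.mem_insert_self i)).trailingDegree_add (coeffsNonneg_sum hs), ih hs]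

end OrderedSemiring

theorem coeffsNonneg_prod {R ι : Type*} [CommSemiring R] [PartialOrder R] [IsOrderedRing R]
    {s : Finset ι} {f : ι → R[X]} (hf : ∀ i ∈ s, CoeffsNonneg (f i)) :
    CoeffsNonneg (∏ i ∈ s, f i) :=
  Finset.prod_induction f CoeffsNonneg (fun _ _ => CoeffsNonneg.mul)
    (fun n => by rw [coeff_one]; split_ifs <;> simp) hf

end Polynomial

theorem Matrix.trailingDegree_trace_list_ofFn_prod {R n : Type*} [CommSemiring R]
    [PartialOrder R] [IsOrderedRing R] [NoZeroDivisors R] [Nontrivial R] [Fintype n]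
    [DecidableEq n] {r : ℕ} (f : Fin (r + 1) → Matrix n n R[X])
    (hf : ∀ k i j, CoeffsNonneg (f k i j)) :
    (trace (List.ofFn f).prod).trailingDegree =
      Finset.univ.inf fun q : Fin (r + 1) → n =>
        ∑ k, (f k (q k) (q (finRotate (r + 1) k))).trailingDegree := by
  rw [trace_list_ofFn_prod,
    trailingDegree_sum_of_coeffsNonneg _ fun q _ => coeffsNonneg_prod fun k _ => hf _ _ _]
  simp only [trailingDegree_prod]

noncomputable def powerEntry (k : ℕ) : ℝ[X] := C (2 ^ (k - 1)) * X ^ k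

theorem powerEntry_succ {k : ℕ} (hk : 1 ≤ k) : powerEntry (k + 1) = 2 * X * powerEntry k := by
  obtain ⟨j, rfl⟩ := Nat.exists_eq_add_of_le' hk
  simp only [powerEntry, Nat.add_sub_cancel, pow_succ, C_mul, map_ofNat]
  ring

theorem coeffsNonneg_powerEntry (k : ℕ) : CoeffsNonneg (powerEntry k) := fun n => by
  rw [powerEntry, coeff_C_mul_X_pow]
  split_ifs <;> positivity

theorem trailingDegree_powerEntry (k : ℕ) : (powerEntry k).trailingDegree = k :=
  trailingDegree_C_mul_X_pow k (by positivity)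

theorem Apoly_pow {m : ℕ} (hm : 1 ≤ m) :
    Apoly ^ m = !![1, 0, 0; 0, powerEntry m, -powerEntry m; 0, -powerEntry m, powerEntry m] := by
  induction m, hm using Nat.le_induction with
  | base => simp [Apoly, powerEntry]
  | succ m hm ih =>
    rw [pow_succ, ih, Apoly, powerEntry_succ hm]
    ext i j : 1
    fin_cases i <;> fin_cases j <;> simp <;> ring

theorem Bpoly_pow {n : ℕ} (hn : 1 ≤ n) :
    Bpoly ^ n = !![powerEntry n, -powerEntry n, 0; -powerEntry n, powerEntry n, 0; 0, 0, 1] := by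
  induction n, hn using Nat.le_induction with
  | base => simp [Bpoly, powerEntry]
  | succ n hn ih =>
    rw [pow_succ, ih, Bpoly, powerEntry_succ hn]
    ext i j : 1
    fin_cases i <;> fin_cases j <;> simp <;> ring

noncomputable def inclMat : Matrix (Fin 3) (Fin 2) ℝ[X] := !![1, 0; 0, -1; 0, 1]

noncomputable def projMat : Matrix (Fin 2) (Fin 3) ℝ[X] := !![1, -1, -1; 0, 0, 1]

noncomputable def blockMatrix (m n : ℕ) : Matrix (Fin 2) (Fin 2) ℝ[X] :=
  !![powerEntry n, powerEntry n;
    powerEntry m * powerEntry n, powerEntry m * powerEntry n + powerEntry m]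

theorem projMat_mul_inclMat : projMat * inclMat = 1 := by
  ext i j : 1
  fin_cases i <;> fin_cases j <;> simp [projMat, inclMat, mul_apply, Fin.sum_univ_three]

theorem Apoly_pow_mul_Bpoly_pow {m n : ℕ} (hm : 1 ≤ m) (hn : 1 ≤ n) :
    Apoly ^ m * Bpoly ^ n = inclMat * blockMatrix m n * projMat := by
  rw [Apoly_pow hm, Bpoly_pow hn]
  ext i j : 1
  fin_cases i <;> fin_cases j <;>
    simp [inclMat, projMat, blockMatrix, mul_apply, Fin.sum_univ_three, Fin.sum_univ_two]

theorem T_flatten {r : ℕ} (a b : Fin r → ℕ) :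
    T (List.ofFn fun i => List.replicate (a i) true ++ List.replicate (b i) false).flatten =
      trace (List.ofFn fun i => Apoly ^ a i * Bpoly ^ b i).prod := by
  simp [T, List.map_flatten, List.prod_flatten, List.map_ofFn, Function.comp_def,
    List.map_replicate, List.prod_replicate]

theorem T_flatten_eq_trace_blockMatrix {r : ℕ} (a b : Fin (r + 1) → ℕ)
    (ha : ∀ i, 1 ≤ a i) (hb : ∀ i, 1 ≤ b i) :
    T (List.ofFn fun i => List.replicate (a i) true ++ List.replicate (b i) false).flatten =
      trace (List.ofFn fun i => blockMatrix (a i) (b i)).prod := by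
  have hconj : (List.ofFn fun i => inclMat * blockMatrix (a i) (b i) * projMat) =
      (List.ofFn fun i => blockMatrix (a i) (b i)).map fun M => inclMat * M * projMat := by
    simp [List.map_ofFn, Function.comp_def]
  simp only [T_flatten, Apoly_pow_mul_Bpoly_pow (ha _) (hb _)]
  rw [hconj, list_prod_map_conj projMat_mul_inclMat _ (by simp), trace_mul_cycle,
    projMat_mul_inclMat, Matrix.one_mul]

def blockWeight (m n : ℕ) : Matrix (Fin 2) (Fin 2) ℕ := !![n, n; m + n, m]

theorem coeffsNonneg_blockMatrix (m n : ℕ) (i j : Fin 2) :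
    CoeffsNonneg (blockMatrix m n i j) := by
  have hm := coeffsNonneg_powerEntry m
  have hn := coeffsNonneg_powerEntry n
  fin_cases i <;> fin_cases j
  exacts [hn, hn, hm.mul hn, (hm.mul hn).add hm]

theorem trailingDegree_blockMatrix (m n : ℕ) (i j : Fin 2) :
    (blockMatrix m n i j).trailingDegree = blockWeight m n i j := by
  have hm := coeffsNonneg_powerEntry m
  fin_cases i <;> fin_cases j <;>
    simp [blockMatrix, blockWeight, trailingDegree_mul, trailingDegree_powerEntry,
      (hm.mul (coeffsNonneg_powerEntry n)).trailingDegree_add hm]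

def subsetCost {r : ℕ} (a b : Fin r → ℕ) (S : Finset (Fin r)) : ℕ :=
  ∑ i ∈ Sᶜ, a i + ∑ i ∈ Finset.univ.filter (fun i => i ∈ S ∨ finRotate r i ∈ S), b i

theorem sum_blockWeight_eq_subsetCost {r : ℕ} (a b : Fin r → ℕ) (q : Fin r → Fin 2) :
    ∑ k, blockWeight (a k) (b k) (q k) (q (finRotate r k)) = subsetCost a b {i | q i = 0} := by
  rw [subsetCost, Finset.compl_filter, Finset.sum_filter, Finset.sum_filter,
    ← Finset.sum_add_distrib]
  refine Finset.sum_congr rfl fun k _ => ?_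
  simp only [Finset.mem_filter, Finset.mem_univ, true_and]
  generalize q k = x, q (finRotate r k) = y
  fin_cases x <;> fin_cases y <;> simp [blockWeight, add_comm]

theorem inf'_sum_blockWeight_eq_inf'_subsetCost {r : ℕ} (a b : Fin r → ℕ) :
    Finset.univ.inf' Finset.univ_nonempty
        (fun q : Fin r → Fin 2 => ∑ k, blockWeight (a k) (b k) (q k) (q (finRotate r k))) =
      Finset.univ.inf' ⟨∅, Finset.mem_univ _⟩ (subsetCost a b) := by
  simp only [sum_blockWeight_eq_subsetCost]
  refine le_antisymm (Finset.le_inf' _ _ fun S _ => ?_) (Finset.le_inf' _ _ fun q _ => ?_)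
  · refine Finset.inf'_le_of_le _ (b := fun i => if i ∈ S then 0 else 1) (Finset.mem_univ _) ?_
    rw [show ({i | (if i ∈ S then (0 : Fin 2) else 1) = 0} : Finset (Fin r)) = S by ext; simp]
  · exact Finset.inf'_le _ (Finset.mem_univ _)

theorem stmt_5 (r : ℕ) (hr : 1 ≤ r) (a b : Fin r → ℕ)
    (ha : ∀ i, 1 ≤ a i) (hb : ∀ i, 1 ≤ b i)
    (w : List Bool)
    (hw : w = (List.ofFn fun i : Fin r =>
      List.replicate (a i) true ++ List.replicate (b i) false).flatten) :
    T w ≠ 0 ∧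
      (T w).natTrailingDegree =
        Finset.univ.inf' ⟨(∅ : Finset (Fin r)), Finset.mem_univ _⟩
          (fun S : Finset (Fin r) =>
            (∑ i ∈ Sᶜ, a i) +
              ∑ i ∈ Finset.univ.filter (fun i => i ∈ S ∨ finRotate r i ∈ S), b i) := by
  obtain ⟨r, rfl⟩ := Nat.exists_eq_add_of_le' hr
  have hT : (T w).trailingDegree =
      ↑(Finset.univ.inf' ⟨∅, Finset.mem_univ _⟩ (subsetCost a b)) := by
    rw [hw, T_flatten_eq_trace_blockMatrix a b ha hb,
      trailingDegree_trace_list_ofFn_prod _ fun k => coeffsNonneg_blockMatrix _ _,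
      ← inf'_sum_blockWeight_eq_inf'_subsetCost]
    simp only [trailingDegree_blockMatrix, ← Nat.cast_sum]
    exact (Finset.coe_inf' _ _).symm
  exact ⟨fun h => by simp [h] at hT, natTrailingDegree_eq_of_trailingDegree_eq_some hT⟩
end

section
/- Let w be the word A³BAB³AB, i.e., the list [true, true, true, false, true, false, false, false, true, false]. Then the coefficients of X⁰, X¹, X², X³ in T(w) all vanish, and the coefficient of X⁴ in T(w) equals 1. -/
open Matrix Polynomial

/- `𝔸` is the projection onto `e₁` plus `X • M` with `M² = 2M` (and dually for `𝔹`),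
which is where the factor `2 ^ n` comes from. -/
theorem Apoly_pow_succ (n : ℕ) :
    Apoly ^ (n + 1) =
      !![1, 0, 0; 0, 2 ^ n * X ^ (n + 1), -(2 ^ n * X ^ (n + 1));
        0, -(2 ^ n * X ^ (n + 1)), 2 ^ n * X ^ (n + 1)] := by
  induction n with
  | zero => simp [Apoly]
  | succ n ih =>
    rw [pow_succ, ih, Apoly, Matrix.mul_fin_three]
    ext i j : 1
    fin_cases i <;> fin_cases j <;> simp <;> ring

theorem Bpoly_pow_succ (n : ℕ) :
    Bpoly ^ (n + 1) =
      !![2 ^ n * X ^ (n + 1), -(2 ^ n * X ^ (n + 1)), 0;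
        -(2 ^ n * X ^ (n + 1)), 2 ^ n * X ^ (n + 1), 0; 0, 0, 1] := by
  induction n with
  | zero => simp [Bpoly]
  | succ n ih =>
    rw [pow_succ, ih, Bpoly, Matrix.mul_fin_three]
    ext i j : 1
    fin_cases i <;> fin_cases j <;> simp <;> ring

theorem T_A3BAB3AB_eq_trace :
    T [true, true, true, false, true, false, false, false, true, false] =
      (Apoly ^ 3 * Bpoly * Apoly * Bpoly ^ 3 * Apoly * Bpoly).trace := by
  simp only [T, List.map_cons, List.map_nil, if_true, Bool.false_eq_true, if_false,
    List.prod_cons, List.prod_nil, mul_one, pow_succ, pow_zero, one_mul, mul_assoc]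

theorem T_A3BAB3AB :
    T [true, true, true, false, true, false, false, false, true, false] =
      X ^ 4 + 8 * X ^ 5 + 16 * X ^ 6 + 8 * X ^ 7 + 64 * X ^ 8 + 64 * X ^ 9 + 16 * X ^ 10 := by
  rw [T_A3BAB3AB_eq_trace, Apoly_pow_succ 2, Bpoly_pow_succ 2, Apoly, Bpoly]
  simp only [Matrix.mul_fin_three, Matrix.trace_fin_three_of]
  ring

theorem stmt_6 :
    (T [true, true, true, false, true, false, false, false, true, false]).coeff 0 = 0 ∧
    (T [true, true, true, false, true, false, false, false, true, false]).coeff 1 = 0 ∧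
    (T [true, true, true, false, true, false, false, false, true, false]).coeff 2 = 0 ∧
    (T [true, true, true, false, true, false, false, false, true, false]).coeff 3 = 0 ∧
    (T [true, true, true, false, true, false, false, false, true, false]).coeff 4 = 1 := by
  rw [T_A3BAB3AB]
  norm_num [coeff_add, coeff_X_pow, coeff_ofNat_mul]
end

section
/- Let n, m ≥ 5 and let w : List Bool be any word containing exactly n entries equal to true and m entries equal to false. Then the coefficients of X⁰, X¹, X², X³ in T(w) are all zero. -/
open Matrix Polynomial

/-!
Expand `T w` as a sum over closed index walks `i₀ → i₁ → ⋯ → i₀` through the supports of the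
letter matrices. Reading `A` costs a factor `X` except at index `0`, reading `B` except at
index `2`, and every step that changes the index costs `X` and moves it by one. A closed walk
that pays for all its `A`s or all its `B`s costs at least `4`; otherwise it reads an `A` at
index `0` and a `B` at index `2`, so it travels from `0` to `2` and back, which also costs `4`.
-/

variable {β ι R : Type*} [CommSemiring R]

/-- These walks index the nonzero terms of `(L b₁ * ⋯ * L bₖ) i j`. -/
inductive Matrix.SupportWalk (L : β → Matrix ι ι R) : List β → ι → ι → Type _
  | nil (i : ι) : SupportWalk L [] i i
  | cons {b : β} {u : List β} {i l j : ι} (h : L b i l ≠ 0) (p : SupportWalk L u l j) :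
      SupportWalk L (b :: u) i j

namespace Matrix.SupportWalk

variable {L : β → Matrix ι ι R}

def cost (v : β → ι → ℕ) : {u : List β} → {i j : ι} → SupportWalk L u i j → ℕ
  | _, _, _, nil _ => 0
  | _, _, _, cons (b := b) (i := i) _ p => v b i + p.cost v

@[simp]
theorem cost_nil (v : β → ι → ℕ) (i : ι) : (nil (L := L) i).cost v = 0 := rfl

@[simp]
theorem cost_cons (v : β → ι → ℕ) {b : β} {u : List β} {i l j : ι} (h : L b i l ≠ 0)
    (p : SupportWalk L u l j) : (cons h p).cost v = v b i + p.cost v := rfl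

theorem cost_add (v w : β → ι → ℕ) {u : List β} {i j : ι} (p : SupportWalk L u i j) :
    p.cost (v + w) = p.cost v + p.cost w := by
  induction p with
  | nil => rfl
  | cons _ p ih => simp only [cost_cons, ih, Pi.add_apply]; ring

end Matrix.SupportWalk

theorem Matrix.pow_dvd_list_prod_apply [Fintype ι] [DecidableEq ι] (L : β → Matrix ι ι R)
    (x : R) (v : β → ι → ℕ) (hv : ∀ b i l, x ^ v b i ∣ L b i l) (u : List β) (i j : ι) (k : ℕ)
    (hk : ∀ p : SupportWalk L u i j, k ≤ p.cost v) : x ^ k ∣ (u.map L).prod i j := by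
  induction u generalizing i k with
  | nil =>
    rcases eq_or_ne i j with rfl | hij
    · simp [Nat.le_zero.mp (hk (.nil i))]
    · simp [one_apply_ne hij]
  | cons b u ih =>
    rw [List.map_cons, List.prod_cons, mul_apply]
    refine Finset.dvd_sum fun l _ => ?_
    by_cases h : L b i l = 0
    · simp [h]
    have hrest : x ^ (k - v b i) ∣ (u.map L).prod l j :=
      ih l _ fun p => by have := hk (.cons h p); simp only [SupportWalk.cost_cons] at this; omega
    calc x ^ k ∣ x ^ (v b i + (k - v b i)) := pow_dvd_pow x (by omega)
      _ ∣ L b i l * (u.map L).prod l j := pow_add x _ _ ▸ mul_dvd_mul (hv b i l) hrest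

noncomputable def letterMatrix (b : Bool) : Matrix (Fin 3) (Fin 3) (Polynomial ℝ) :=
  if b = true then Apoly else Bpoly

def costA (b : Bool) (i : Fin 3) : ℕ := if b = true ∧ (i : ℕ) ≠ 0 then 1 else 0

def costB (b : Bool) (i : Fin 3) : ℕ := if b = false ∧ (i : ℕ) ≠ 2 then 1 else 0

theorem X_pow_dvd_letterMatrix_apply (b : Bool) (i l : Fin 3) :
    X ^ (costA + costB) b i ∣ letterMatrix b i l := by
  cases b <;> fin_cases i <;> fin_cases l <;> simp [letterMatrix, Apoly, Bpoly, costA, costB]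

theorem val_eq_zero_iff_of_Apoly_apply_ne_zero {i l : Fin 3} (h : Apoly i l ≠ 0) :
    (i : ℕ) = 0 ↔ (l : ℕ) = 0 := by
  fin_cases i <;> fin_cases l <;> simp_all [Apoly]

theorem val_eq_two_iff_of_Bpoly_apply_ne_zero {i l : Fin 3} (h : Bpoly i l ≠ 0) :
    (i : ℕ) = 2 ↔ (l : ℕ) = 2 := by
  fin_cases i <;> fin_cases l <;> simp_all [Bpoly]

-- `p.cost costA < u.count true` says that `p` reads some `A` at index `0`, and
-- `p.cost costB < u.count false` that it reads some `B` at index `2`.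
theorem letterMatrix_walk_cost_bounds {u : List Bool} {i j : Fin 3}
    (p : SupportWalk letterMatrix u i j) :
    (i - j : ℕ) + (j - i) ≤ p.cost costA + p.cost costB ∧
    (p.cost costA < u.count true → i + j ≤ p.cost costA + p.cost costB) ∧
    (p.cost costB < u.count false → (2 - i : ℕ) + (2 - j) ≤ p.cost costA + p.cost costB) ∧
    (p.cost costA < u.count true → p.cost costB < u.count false →
      4 ≤ p.cost costA + p.cost costB + (i - j : ℕ) + (j - i)) := by
  induction p with
  | nil i => simp
  | @cons c u i l j h p ih =>
    have := i.isLt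
    have := l.isLt
    cases c <;>
      [have := val_eq_two_iff_of_Bpoly_apply_ne_zero h;
       have := val_eq_zero_iff_of_Apoly_apply_ne_zero h] <;>
      simp only [SupportWalk.cost_cons, costA, costB, List.count_cons, beq_iff_eq] at ih ⊢ <;>
      split_ifs at * <;> simp_all <;> omega

theorem X_pow_four_dvd_T {w : List Bool} (hA : 4 ≤ w.count true) (hB : 4 ≤ w.count false) :
    X ^ 4 ∣ T w := by
  change X ^ 4 ∣ ((w.map letterMatrix).prod).trace
  refine Finset.dvd_sum fun i _ => ?_
  refine pow_dvd_list_prod_apply letterMatrix X _ X_pow_dvd_letterMatrix_apply w i i 4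
    fun p => ?_
  have := letterMatrix_walk_cost_bounds p
  rw [SupportWalk.cost_add]
  omega

theorem stmt_8 (n m : ℕ) (hn : 5 ≤ n) (hm : 5 ≤ m) (w : List Bool)
    (hwn : w.count true = n) (hwm : w.count false = m) :
    (T w).coeff 0 = 0 ∧ (T w).coeff 1 = 0 ∧ (T w).coeff 2 = 0 ∧ (T w).coeff 3 = 0 := by
  have hcoeff := X_pow_dvd_iff.mp (X_pow_four_dvd_T (w := w) (by omega) (by omega))
  exact ⟨hcoeff 0 (by norm_num), hcoeff 1 (by norm_num), hcoeff 2 (by norm_num),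
    hcoeff 3 (by norm_num)⟩
end

section
/- Let n, m ≥ 5, let ℓ := min{n, m}, and let d := 2^ℓ if n = m and d := 2^{ℓ−1} if n ≠ m. Then the limit as x → 0⁺ of x^{ℓ−4} · p_{n,m}(A_x, B_x) / tr(A_x^n · B_x^m) exists and equals (n+m)/(d · binom(n+m, n)). -/
open Matrix

/-- The (finite) set `𝒲_{n,m}` of words with exactly `n` letters `A` (`true`)
and `m` letters `B` (`false`). -/
def words (n m : ℕ) : Finset (List Bool) :=
  (List.replicate n true ++ List.replicate m false).permutations.toFinset

/-- `tr w(A_x, B_x)`: the trace of the word `w` evaluated at `(A_x, B_x)`. -/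
noncomputable def wtr (x : ℝ) (w : List Bool) : ℝ :=
  ((w.map fun b => if b = true then Amat x else Bmat x).prod).trace

/-- The averaged word trace `p_{n,m}(A_x, B_x)`. -/
noncomputable def pnm (n m : ℕ) (x : ℝ) : ℝ :=
  (1 / ((n + m).choose n)) * ∑ w ∈ words n m, wtr x w

/-!
Write `T(n, m)` for the sum of all words with `n` letters `A` and `m` letters `B`, so that
`T(n+1, m+1) = A T(n, m+1) + B T(n+1, m)` and `∑_w tr w(A_x, B_x) = tr T(n, m)`. The entries of
`A_x` and `B_x` are affine in `x`, so `T(n, m)` may be computed modulo `x⁵`, that is, over a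
commutative ring with an element `ε`, `ε⁵ = 0`. There the rows `T(k, m)`, `k ≤ 4`, are polynomial
in `m` from `m = 5` on; exchanging `e₁` and `e₃` swaps `A` and `B`, hence rows and columns; and
for `n, m ≥ 5` the recursion then pins `T(n, m)` down to an explicit matrix of trace `(n + m) ε⁴`.
Hence `∑_w tr w(A_x, B_x) = (n + m) x⁴ + O(x⁵)`, whereas
`tr(A_x^n B_x^m) = 2^(n-1) x^n + 2^(m-1) x^m + 2^(n+m-2) x^(n+m)` is `d x^ℓ (1 + o(1))`.
-/

open Polynomial

theorem mem_words {n m : ℕ} {w : List Bool} :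
    w ∈ words n m ↔ w.count true = n ∧ w.count false = m := by
  rw [words, List.mem_toFinset, List.mem_permutations,
    List.perm_replicate_append_replicate (by decide : true ≠ false)]
  refine ⟨fun h => ⟨h.1, h.2.1⟩, fun h => ⟨h.1, h.2, fun b _ => by cases b <;> simp⟩⟩

theorem words_zero_right (n : ℕ) : words n 0 = {List.replicate n true} := by
  ext w
  simp [words, List.perm_replicate]

theorem words_zero_left (m : ℕ) : words 0 m = {List.replicate m false} := by
  ext w
  simp [words, List.perm_replicate]

theorem words_succ_succ (n m : ℕ) :
    words (n + 1) (m + 1) =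
      (words n (m + 1)).image (List.cons true) ∪ (words (n + 1) m).image (List.cons false) := by
  ext (_ | ⟨_ | _, w⟩) <;> simp [mem_words]

section WordSum

variable {M N : Type*} [Semiring M] [Semiring N]

def wordSum (a b : M) (n m : ℕ) : M :=
  ∑ w ∈ words n m, (w.map fun t => if t = true then a else b).prod

theorem wordSum_zero_right (a b : M) (n : ℕ) : wordSum a b n 0 = a ^ n := by
  simp [wordSum, words_zero_right]

theorem wordSum_zero_left (a b : M) (m : ℕ) : wordSum a b 0 m = b ^ m := by
  simp [wordSum, words_zero_left]

theorem wordSum_succ_succ (a b : M) (n m : ℕ) :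
    wordSum a b (n + 1) (m + 1) = a * wordSum a b n (m + 1) + b * wordSum a b (n + 1) m := by
  rw [wordSum, words_succ_succ, Finset.sum_union, Finset.sum_image List.cons_injective.injOn,
    Finset.sum_image List.cons_injective.injOn, wordSum, wordSum, Finset.mul_sum, Finset.mul_sum]
  · simp
  · simp [Finset.disjoint_left]

theorem wordSum_comm (a b : M) : ∀ n m, wordSum a b n m = wordSum b a m n
  | 0, m => by rw [wordSum_zero_left, wordSum_zero_right]
  | n + 1, 0 => by rw [wordSum_zero_right, wordSum_zero_left]
  | n + 1, m + 1 => by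
    rw [wordSum_succ_succ, wordSum_succ_succ, wordSum_comm a b n, wordSum_comm a b (n + 1),
      add_comm]

theorem map_wordSum {F : Type*} [FunLike F M N] [RingHomClass F M N] (f : F) (a b : M) (n m : ℕ) :
    f (wordSum a b n m) = wordSum (f a) (f b) n m := by
  simp only [wordSum, map_sum, map_list_prod, List.map_map]
  congr! 2 with w
  exact List.map_congr_left fun t _ => by cases t <;> rfl

end WordSum

section NilpotentParameter

variable {R : Type*} [CommRing R] {ε : R}

def matA (ε : R) : Matrix (Fin 3) (Fin 3) R :=
  !![1, 0, 0; 0, ε, -ε; 0, -ε, ε]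

def matB (ε : R) : Matrix (Fin 3) (Fin 3) R :=
  !![ε, -ε, 0; -ε, ε, 0; 0, 0, 1]

theorem matA_mul_add_matB_mul {p₁₁ p₁₂ p₁₃ p₂₁ p₂₂ p₂₃ p₃₁ p₃₂ p₃₃
    q₁₁ q₁₂ q₁₃ q₂₁ q₂₂ q₂₃ q₃₁ q₃₂ q₃₃ : R} :
    matA ε * !![p₁₁, p₁₂, p₁₃; p₂₁, p₂₂, p₂₃; p₃₁, p₃₂, p₃₃] +
        matB ε * !![q₁₁, q₁₂, q₁₃; q₂₁, q₂₂, q₂₃; q₃₁, q₃₂, q₃₃] =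
      !![p₁₁ + ε * (q₁₁ - q₂₁), p₁₂ + ε * (q₁₂ - q₂₂), p₁₃ + ε * (q₁₃ - q₂₃);
        ε * (p₂₁ - p₃₁) - ε * (q₁₁ - q₂₁), ε * (p₂₂ - p₃₂) - ε * (q₁₂ - q₂₂),
          ε * (p₂₃ - p₃₃) - ε * (q₁₃ - q₂₃);
        ε * (p₃₁ - p₂₁) + q₃₁, ε * (p₃₂ - p₂₂) + q₃₂, ε * (p₃₃ - p₂₃) + q₃₃] := by
  ext i j
  fin_cases i <;> fin_cases j <;> simp [matA, matB] <;> ring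

theorem matA_pow_succ (n : ℕ) :
    matA ε ^ (n + 1) =
      !![1, 0, 0; 0, 2 ^ n * ε ^ (n + 1), -(2 ^ n * ε ^ (n + 1));
        0, -(2 ^ n * ε ^ (n + 1)), 2 ^ n * ε ^ (n + 1)] := by
  induction n with
  | zero => simp [matA]
  | succ n ih =>
    rw [pow_succ, ih, matA, mul_fin_three]
    ext i j
    fin_cases i <;> fin_cases j <;> simp <;> ring

theorem matB_pow_succ (n : ℕ) :
    matB ε ^ (n + 1) =
      !![2 ^ n * ε ^ (n + 1), -(2 ^ n * ε ^ (n + 1)), 0;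
        -(2 ^ n * ε ^ (n + 1)), 2 ^ n * ε ^ (n + 1), 0; 0, 0, 1] := by
  induction n with
  | zero => simp [matB]
  | succ n ih =>
    rw [pow_succ, ih, matB, mul_fin_three]
    ext i j
    fin_cases i <;> fin_cases j <;> simp <;> ring

def swapOuter : Matrix (Fin 3) (Fin 3) R ≃+* Matrix (Fin 3) (Fin 3) R :=
  reindexRingEquiv R (Equiv.swap 0 2)

theorem swapOuter_of (a b c d e f g h i : R) :
    swapOuter !![a, b, c; d, e, f; g, h, i] = !![i, h, g; f, e, d; c, b, a] := by
  ext i j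
  fin_cases i <;> fin_cases j <;> rfl

theorem swapOuter_matA : swapOuter (matA ε) = matB ε := by
  rw [matA, swapOuter_of, matB]

theorem swapOuter_matB : swapOuter (matB ε) = matA ε := by
  rw [matB, swapOuter_of, matA]

theorem wordSum_matA_matB_eq_swapOuter (n m : ℕ) :
    wordSum (matA ε) (matB ε) n m = swapOuter (wordSum (matA ε) (matB ε) m n) := by
  rw [map_wordSum, swapOuter_matA, swapOuter_matB, wordSum_comm]

theorem map_trace_wordSum {S : Type*} [CommRing S] (f : R →+* S) (n m : ℕ) :
    f (trace (wordSum (matA ε) (matB ε) n m)) = trace (wordSum (matA (f ε)) (matB (f ε)) n m) := by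
  have hA : f.mapMatrix (matA ε) = matA (f ε) := by
    ext i j
    fin_cases i <;> fin_cases j <;> simp [matA]
  have hB : f.mapMatrix (matB ε) = matB (f ε) := by
    ext i j
    fin_cases i <;> fin_cases j <;> simp [matB]
  rw [AddMonoidHom.map_trace, ← RingHom.mapMatrix_apply, map_wordSum, hA, hB]

-- Entries are written in the basis `m.choose j`, in which `m ↦ m + 1` is Pascal's rule.
def strip (ε : R) : ℕ → ℕ → Matrix (Fin 3) (Fin 3) R
  | 0, _ => !![0, 0, 0; 0, 0, 0; 0, 0, 1]
  | 1, m =>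
    !![0, 0, ε ^ 2 + 2 * ε ^ 3 + 4 * ε ^ 4;
      0, 0, -ε - ε ^ 2 - 2 * ε ^ 3 - 4 * ε ^ 4;
      ε ^ 2 + 2 * ε ^ 3 + 4 * ε ^ 4, -ε - ε ^ 2 - 2 * ε ^ 3 - 4 * ε ^ 4, (1 + m) * ε]
  | 2, m =>
    !![ε ^ 4, -ε ^ 3 - 3 * ε ^ 4, ε ^ 2 + (4 + m) * ε ^ 3 + (9 + 2 * m) * ε ^ 4;
      -ε ^ 3 - 3 * ε ^ 4, ε ^ 2 + 2 * ε ^ 3 + 5 * ε ^ 4,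
        -(2 + m) * ε ^ 2 - (3 + m) * ε ^ 3 - (7 + 2 * m) * ε ^ 4;
      ε ^ 2 + (4 + m) * ε ^ 3 + (9 + 2 * m) * ε ^ 4,
        -(2 + m) * ε ^ 2 - (3 + m) * ε ^ 3 - (7 + 2 * m) * ε ^ 4,
        (2 + 3 * m + m.choose 2) * ε ^ 2 + m * ε ^ 3 + (2 * m - 2) * ε ^ 4]
  | 3, m =>
    !![2 * ε ^ 4, -ε ^ 3 - (6 + m) * ε ^ 4,
        ε ^ 2 + (5 + m) * ε ^ 3 + (15 + 6 * m + m.choose 2) * ε ^ 4;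
      -ε ^ 3 - (6 + m) * ε ^ 4, (3 + m) * ε ^ 3 + (8 + 2 * m) * ε ^ 4,
        -(5 + 4 * m + m.choose 2) * ε ^ 3 - (9 + 6 * m + m.choose 2) * ε ^ 4;
      ε ^ 2 + (5 + m) * ε ^ 3 + (15 + 6 * m + m.choose 2) * ε ^ 4,
        -(5 + 4 * m + m.choose 2) * ε ^ 3 - (9 + 6 * m + m.choose 2) * ε ^ 4,
        (4 + 8 * m + 5 * m.choose 2 + m.choose 3) * ε ^ 3 + (5 * m + 2 * m.choose 2 - 1) * ε ^ 4]
  | 4, m =>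
    !![3 * ε ^ 4, -ε ^ 3 - (7 + m) * ε ^ 4,
        ε ^ 2 + (6 + m) * ε ^ 3 + (21 + 7 * m + m.choose 2) * ε ^ 4;
      -ε ^ 3 - (7 + m) * ε ^ 4, (9 + 5 * m + m.choose 2) * ε ^ 4,
        -ε ^ 3 - (15 + 13 * m + 6 * m.choose 2 + m.choose 3) * ε ^ 4;
      ε ^ 2 + (6 + m) * ε ^ 3 + (21 + 7 * m + m.choose 2) * ε ^ 4,
        -ε ^ 3 - (15 + 13 * m + 6 * m.choose 2 + m.choose 3) * ε ^ 4,
        (7 + 21 * m + 18 * m.choose 2 + 7 * m.choose 3 + m.choose 4) * ε ^ 4]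
  | _, _ => 0

theorem matB_mul_strip_zero (m : ℕ) : matB ε * strip ε 0 m = strip ε 0 (m + 1) := by
  ext i j
  fin_cases i <;> fin_cases j <;> simp [strip, matB, mul_apply, Fin.sum_univ_three]

theorem matA_mul_strip_add_matB_mul_strip (hε : ε ^ 5 = 0) {k : ℕ} (hk : k < 4) (m : ℕ) :
    matA ε * strip ε k (m + 1) + matB ε * strip ε (k + 1) m = strip ε (k + 1) (m + 1) := by
  interval_cases k <;> simp only [strip, matA_mul_add_matB_mul] <;> ext i j <;>
    fin_cases i <;> fin_cases j <;> simp [Nat.choose_succ_succ'] <;> ring_nf <;> simp [hε]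

theorem wordSum_matA_matB_succ_succ {n m : ℕ} {p₁₁ p₁₂ p₁₃ p₂₁ p₂₂ p₂₃ p₃₁ p₃₂ p₃₃
    q₁₁ q₁₂ q₁₃ q₂₁ q₂₂ q₂₃ q₃₁ q₃₂ q₃₃ : R}
    (h₁ : wordSum (matA ε) (matB ε) n (m + 1) = !![p₁₁, p₁₂, p₁₃; p₂₁, p₂₂, p₂₃; p₃₁, p₃₂, p₃₃])
    (h₂ : wordSum (matA ε) (matB ε) (n + 1) m = !![q₁₁, q₁₂, q₁₃; q₂₁, q₂₂, q₂₃; q₃₁, q₃₂, q₃₃]) :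
    wordSum (matA ε) (matB ε) (n + 1) (m + 1) =
      !![p₁₁ + ε * (q₁₁ - q₂₁), p₁₂ + ε * (q₁₂ - q₂₂), p₁₃ + ε * (q₁₃ - q₂₃);
        ε * (p₂₁ - p₃₁) - ε * (q₁₁ - q₂₁), ε * (p₂₂ - p₃₂) - ε * (q₁₂ - q₂₂),
          ε * (p₂₃ - p₃₃) - ε * (q₁₃ - q₂₃);
        ε * (p₃₁ - p₂₁) + q₃₁, ε * (p₃₂ - p₂₂) + q₃₂, ε * (p₃₃ - p₂₃) + q₃₃] := by
  rw [wordSum_succ_succ, h₁, h₂, matA_mul_add_matB_mul]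

set_option maxHeartbeats 800000 in
theorem wordSum_eq_strip_five (hε : ε ^ 5 = 0) {k : ℕ} (hk : k ≤ 4) :
    wordSum (matA ε) (matB ε) k 5 = strip ε k 5 := by
  have hA (i : ℕ) := (wordSum_zero_right (matA ε) (matB ε) (i + 1)).trans (matA_pow_succ i)
  have hB (j : ℕ) := (wordSum_zero_left (matA ε) (matB ε) (j + 1)).trans (matB_pow_succ j)
  have h10 := hA 0
  have h20 := hA 1
  have h30 := hA 2
  have h40 := hA 3
  have h01 := hB 0
  have h02 := hB 1
  have h03 := hB 2
  have h04 := hB 3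
  have h05 := hB 4
  norm_num at h10 h20 h30 h40 h01 h02 h03 h04 h05
  -- `hij` is the exact value of `T(i, j)`, computed from the recursion.
  have h11 := wordSum_matA_matB_succ_succ h01 h10; ring_nf at h11
  have h12 := wordSum_matA_matB_succ_succ h02 h11; ring_nf at h12
  have h13 := wordSum_matA_matB_succ_succ h03 h12; ring_nf at h13
  have h14 := wordSum_matA_matB_succ_succ h04 h13; ring_nf at h14
  have h15 := wordSum_matA_matB_succ_succ h05 h14; ring_nf at h15
  have h21 := wordSum_matA_matB_succ_succ h11 h20; ring_nf at h21
  have h22 := wordSum_matA_matB_succ_succ h12 h21; ring_nf at h22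
  have h23 := wordSum_matA_matB_succ_succ h13 h22; ring_nf at h23
  have h24 := wordSum_matA_matB_succ_succ h14 h23; ring_nf at h24
  have h25 := wordSum_matA_matB_succ_succ h15 h24; ring_nf at h25
  have h31 := wordSum_matA_matB_succ_succ h21 h30; ring_nf at h31
  have h32 := wordSum_matA_matB_succ_succ h22 h31; ring_nf at h32
  have h33 := wordSum_matA_matB_succ_succ h23 h32; ring_nf at h33
  have h34 := wordSum_matA_matB_succ_succ h24 h33; ring_nf at h34
  have h35 := wordSum_matA_matB_succ_succ h25 h34; ring_nf at h35
  have h41 := wordSum_matA_matB_succ_succ h31 h40; ring_nf at h41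
  have h42 := wordSum_matA_matB_succ_succ h32 h41; ring_nf at h42
  have h43 := wordSum_matA_matB_succ_succ h33 h42; ring_nf at h43
  have h44 := wordSum_matA_matB_succ_succ h34 h43; ring_nf at h44
  have h45 := wordSum_matA_matB_succ_succ h35 h44; ring_nf at h45
  have hkill (j : ℕ) (hj : 5 ≤ j) : ε ^ j = 0 := pow_eq_zero_of_le hj hε
  interval_cases k <;> simp only [h05, h15, h25, h35, h45, strip] <;> ext i j <;>
    fin_cases i <;> fin_cases j <;> norm_num [hkill, Nat.choose] <;> ring

theorem wordSum_eq_strip (hε : ε ^ 5 = 0) {k m : ℕ} (hk : k ≤ 4) (hm : 5 ≤ m) :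
    wordSum (matA ε) (matB ε) k m = strip ε k m := by
  induction k generalizing m with
  | zero =>
    induction m, hm using Nat.le_induction with
    | base => exact wordSum_eq_strip_five hε hk
    | succ m _ ih => rw [wordSum_zero_left, pow_succ', ← wordSum_zero_left, ih, matB_mul_strip_zero]
  | succ k ihk =>
    induction m, hm using Nat.le_induction with
    | base => exact wordSum_eq_strip_five hε hk
    | succ m hm ih =>
      rw [wordSum_succ_succ, ihk (by omega) (by omega), ih,
        matA_mul_strip_add_matB_mul_strip hε (by omega)]

-- The `ε ^ 4`-coefficient of the corner entries is `(n + m + 3).choose 2`.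
def bulk (ε : R) (n m : ℕ) : Matrix (Fin 3) (Fin 3) R :=
  !![(n - 1) * ε ^ 4, -ε ^ 3 - (n + m + 3) * ε ^ 4,
      ε ^ 2 + (n + m + 2) * ε ^ 3 + (n.choose 2 + m.choose 2 + n * m + 3 * n + 3 * m + 3) * ε ^ 4;
    -ε ^ 3 - (n + m + 3) * ε ^ 4, 2 * ε ^ 4, -ε ^ 3 - (n + m + 3) * ε ^ 4;
    ε ^ 2 + (n + m + 2) * ε ^ 3 + (n.choose 2 + m.choose 2 + n * m + 3 * n + 3 * m + 3) * ε ^ 4,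
      -ε ^ 3 - (n + m + 3) * ε ^ 4, (m - 1) * ε ^ 4]

theorem swapOuter_bulk (n m : ℕ) : swapOuter (bulk ε n m) = bulk ε m n := by
  rw [bulk, swapOuter_of, bulk]
  ext i j
  fin_cases i <;> fin_cases j <;> simp <;> ring

theorem trace_bulk (n m : ℕ) : trace (bulk ε n m) = (n + m) * ε ^ 4 := by
  simp [bulk, trace_fin_three]
  ring

theorem matA_mul_strip_add_matB_mul_swapOuter_strip (hε : ε ^ 5 = 0) :
    matA ε * strip ε 4 5 + matB ε * swapOuter (strip ε 4 5) = bulk ε 5 5 := by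
  simp only [strip, bulk, swapOuter_of, matA_mul_add_matB_mul]
  ext i j
  fin_cases i <;> fin_cases j <;> simp [Nat.choose_succ_succ'] <;> ring_nf <;> simp [hε]

theorem matA_mul_strip_add_matB_mul_bulk (hε : ε ^ 5 = 0) (m : ℕ) :
    matA ε * strip ε 4 (m + 1) + matB ε * bulk ε 5 m = bulk ε 5 (m + 1) := by
  simp only [strip, bulk, matA_mul_add_matB_mul]
  ext i j
  fin_cases i <;> fin_cases j <;> simp [Nat.choose_succ_succ'] <;> ring_nf <;> simp [hε]

theorem matA_mul_bulk_add_matB_mul_bulk (hε : ε ^ 5 = 0) (n m : ℕ) :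
    matA ε * bulk ε n (m + 1) + matB ε * bulk ε (n + 1) m = bulk ε (n + 1) (m + 1) := by
  simp only [bulk, matA_mul_add_matB_mul]
  ext i j
  fin_cases i <;> fin_cases j <;> simp [Nat.choose_succ_succ'] <;> ring_nf <;> simp [hε]

theorem wordSum_five_eq_bulk (hε : ε ^ 5 = 0) {m : ℕ} (hm : 5 ≤ m) :
    wordSum (matA ε) (matB ε) 5 m = bulk ε 5 m := by
  induction m, hm using Nat.le_induction with
  | base =>
    rw [wordSum_succ_succ, wordSum_matA_matB_eq_swapOuter 5 4, wordSum_eq_strip hε le_rfl le_rfl,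
      matA_mul_strip_add_matB_mul_swapOuter_strip hε]
  | succ m hm ih =>
    rw [wordSum_succ_succ, wordSum_eq_strip hε le_rfl (by omega), ih,
      matA_mul_strip_add_matB_mul_bulk hε]

theorem wordSum_eq_bulk (hε : ε ^ 5 = 0) {n m : ℕ} (hn : 5 ≤ n) (hm : 5 ≤ m) :
    wordSum (matA ε) (matB ε) n m = bulk ε n m := by
  induction n, hn using Nat.le_induction generalizing m with
  | base => exact wordSum_five_eq_bulk hε hm
  | succ n hn ih =>
    induction m, hm using Nat.le_induction with
    | base =>
      rw [wordSum_matA_matB_eq_swapOuter, wordSum_five_eq_bulk hε (by omega), swapOuter_bulk]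
    | succ m hm ihm =>
      rw [wordSum_succ_succ, ih (by omega), ihm, matA_mul_bulk_add_matB_mul_bulk hε]

theorem trace_wordSum (hε : ε ^ 5 = 0) {n m : ℕ} (hn : 5 ≤ n) (hm : 5 ≤ m) :
    trace (wordSum (matA ε) (matB ε) n m) = (n + m) * ε ^ 4 := by
  rw [wordSum_eq_bulk hε hn hm, trace_bulk]

end NilpotentParameter

theorem exists_trace_wordSum_eq {n m : ℕ} (hn : 5 ≤ n) (hm : 5 ≤ m) :
    ∃ q : ℝ[X], ∀ x : ℝ,
      trace (wordSum (Amat x) (Bmat x) n m) = (n + m) * x ^ 4 + x ^ 5 * q.eval x := by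
  set π := Ideal.Quotient.mk (Ideal.span {(X : ℝ[X]) ^ 5})
  have hε : π X ^ 5 = 0 := by
    rw [← map_pow, Ideal.Quotient.eq_zero_iff_mem]
    exact Ideal.subset_span rfl
  have hmem : trace (wordSum (matA X) (matB X) n m) - (n + m : ℝ[X]) * X ^ 4 ∈
      Ideal.span {(X : ℝ[X]) ^ 5} := by
    rw [← Ideal.Quotient.eq_zero_iff_mem, map_sub, map_trace_wordSum, trace_wordSum hε hn hm]
    simp [π]
  obtain ⟨q, hq⟩ := Ideal.mem_span_singleton'.mp hmem
  refine ⟨q, fun x => ?_⟩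
  have := congrArg (Polynomial.evalRingHom x) hq
  rw [map_sub, map_trace_wordSum] at this
  simp only [map_mul, map_pow, map_add, map_natCast, coe_evalRingHom, eval_X] at this
  change trace (wordSum (matA x) (matB x) n m) = _
  linear_combination -this

theorem trace_Amat_pow_mul_Bmat_pow (n m : ℕ) (x : ℝ) :
    trace (Amat x ^ (n + 1) * Bmat x ^ (m + 1)) =
      2 ^ n * x ^ (n + 1) + 2 ^ m * x ^ (m + 1) + 2 ^ (n + m) * x ^ (n + m + 2) := by
  rw [show Amat x = matA x from rfl, show Bmat x = matB x from rfl, matA_pow_succ, matB_pow_succ,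
    mul_fin_three, trace_fin_three_of]
  ring

theorem exists_trace_Amat_pow_mul_Bmat_pow_eq {n m : ℕ} (hn : 1 ≤ n) (hm : 1 ≤ m) :
    ∃ g : ℝ → ℝ, Continuous g ∧
      g 0 = (if n = m then 2 ^ min n m else 2 ^ (min n m - 1) : ℕ) ∧
      ∀ x, trace (Amat x ^ n * Bmat x ^ m) = x ^ min n m * g x := by
  obtain ⟨n, rfl⟩ := Nat.exists_eq_add_of_le' hn
  obtain ⟨m, rfl⟩ := Nat.exists_eq_add_of_le' hm
  set ℓ := min (n + 1) (m + 1) with hℓ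
  refine ⟨fun x => 2 ^ n * x ^ (n + 1 - ℓ) + 2 ^ m * x ^ (m + 1 - ℓ) +
    2 ^ (n + m) * x ^ (n + m + 2 - ℓ), by fun_prop, ?_, fun x => ?_⟩
  · dsimp only
    rw [zero_pow (by omega : n + m + 2 - ℓ ≠ 0)]
    rcases lt_trichotomy n m with h | rfl | h
    · rw [show n + 1 - ℓ = 0 by omega, zero_pow (by omega : m + 1 - ℓ ≠ 0), if_neg (by omega),
        show ℓ - 1 = n by omega]
      simp
    · rw [show n + 1 - ℓ = 0 by omega, if_pos rfl, show ℓ = n + 1 by omega]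
      push_cast
      ring
    · rw [show m + 1 - ℓ = 0 by omega, zero_pow (by omega : n + 1 - ℓ ≠ 0), if_neg (by omega),
        show ℓ - 1 = m by omega]
      simp
  · have hpow (k : ℕ) (hk : ℓ ≤ k) : x ^ k = x ^ ℓ * x ^ (k - ℓ) := by
      rw [← pow_add, Nat.add_sub_cancel' hk]
    rw [trace_Amat_pow_mul_Bmat_pow, hpow (n + 1) (min_le_left ..), hpow (m + 1) (min_le_right ..),
      hpow (n + m + 2) (by omega)]
    ring

theorem sum_wtr_eq_trace_wordSum (n m : ℕ) (x : ℝ) :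
    ∑ w ∈ words n m, wtr x w = trace (wordSum (Amat x) (Bmat x) n m) := by
  rw [wordSum, trace_sum]
  rfl

theorem stmt_11 (n m : ℕ) (hn : 5 ≤ n) (hm : 5 ≤ m) (ℓ d : ℕ)
    (hℓ : ℓ = min n m) (hd : d = if n = m then 2 ^ ℓ else 2 ^ (ℓ - 1)) :
    Filter.Tendsto
      (fun x : ℝ => x ^ (ℓ - 4) * pnm n m x / (Amat x ^ n * Bmat x ^ m).trace)
      (nhdsWithin 0 (Set.Ioi 0))
      (nhds ((n + m : ℝ) / (d * ((n + m).choose n)))) := by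
  obtain ⟨q, hq⟩ := exists_trace_wordSum_eq hn hm
  obtain ⟨g, hg, hg0, htr⟩ :=
    exists_trace_Amat_pow_mul_Bmat_pow_eq (n := n) (m := m) (by omega) (by omega)
  rw [← hℓ, ← hd] at hg0
  rw [← hℓ] at htr
  have hC : ((n + m).choose n : ℝ) ≠ 0 := Nat.cast_ne_zero.mpr (Nat.choose_pos (by omega)).ne'
  have hd0 : g 0 ≠ 0 := by rw [hg0, hd]; split_ifs <;> positivity
  have hF : ContinuousAt (fun x => (n + m + x * q.eval x) / ((n + m).choose n * g x)) 0 :=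
    (by fun_prop : Continuous fun x => n + m + x * q.eval x).continuousAt.div
      (continuous_const.mul hg).continuousAt (mul_ne_zero hC hd0)
  have hvalue : (n + m + 0 * q.eval 0) / ((n + m).choose n * g 0) =
      (n + m : ℝ) / (d * ((n + m).choose n)) := by
    rw [hg0]
    ring
  rw [← hvalue]
  refine (hF.tendsto.mono_left nhdsWithin_le_nhds).congr' ?_
  filter_upwards [self_mem_nhdsWithin, nhdsWithin_le_nhds (hg.continuousAt.eventually_ne hd0)]
    with x (hx : 0 < x) hgx
  have hℓ4 : x ^ (ℓ - 4) * x ^ 4 = x ^ ℓ := by rw [← pow_add, Nat.sub_add_cancel (by omega)]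
  rw [pnm, sum_wtr_eq_trace_wordSum, hq, htr]
  field_simp
  rw [← hℓ4]
  ring
end
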